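/- arXiv:1910.03946 — 6 statements merged into one kernel-verified Lean document; each statement's English description precedes it below -/
import Mathlib

section
/- Let 𝒳 be a Polish space, let μ be a Borel probability measure on 𝒳, and let f ∈ C_b(𝒳). Then log ∫ e^f dμ = sup over Borel probability measures ν on 𝒳 of ( ∫ f dν − S(ν | μ) ), where the supremum is taken with the convention that a term with S(ν | μ) = ∞ contributes −∞. -/
open MeasureTheory Filter Topology
open scoped ENNReal NNReal

-- Relative entropy (Kullback–Leibler divergence) `S(ν | μ)`, valued in `[0, ∞]`:
-- `S(ν | μ) = ∫ log (dν/dμ) dν` if `ν ≪ μ` (and the integral exists), and `∞` otherwise.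
open scoped Classical in
noncomputable def relEnt {𝒳 : Type*} [MeasurableSpace 𝒳] (ν μ : Measure 𝒳) : ℝ≥0∞ :=
  if ν ≪ μ ∧ Integrable (llr ν μ) ν then ENNReal.ofReal (∫ x, llr ν μ x ∂ν) else ⊤

/-- Gibbs' inequality: the relative entropy integral is nonnegative. -/
lemma gibbs_integral_llr_nonneg {𝒳 : Type*} [MeasurableSpace 𝒳] {ν μ : Measure 𝒳}
    [IsProbabilityMeasure ν] [IsFiniteMeasure μ] (hμ1 : μ Set.univ ≤ 1)
    (hac : ν ≪ μ) (hint : Integrable (llr ν μ) ν) :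
    0 ≤ ∫ x, llr ν μ x ∂ν := by
  have h_eq : (fun x ↦ Real.exp (- llr ν μ x)) =ᵐ[ν] fun x ↦ (μ.rnDeriv ν x).toReal :=
    exp_neg_llr hac
  have h_int_exp : Integrable (fun x ↦ Real.exp (- llr ν μ x)) ν :=
    (integrable_congr h_eq).mpr Measure.integrable_toReal_rnDeriv
  have h_jensen : Real.exp (∫ x, - llr ν μ x ∂ν) ≤ ∫ x, Real.exp (- llr ν μ x) ∂ν := by
    refine convexOn_exp.map_integral_le Real.continuous_exp.continuousOn isClosed_univ
      (ae_of_all _ fun x ↦ Set.mem_univ _) hint.neg h_int_exp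
  have h_le_one : ∫ x, Real.exp (- llr ν μ x) ∂ν ≤ 1 := by
    rw [integral_congr_ae h_eq]
    calc ∫ x, (μ.rnDeriv ν x).toReal ∂ν
        = ∫ x in Set.univ, (μ.rnDeriv ν x).toReal ∂ν := setIntegral_univ.symm
      _ ≤ (μ Set.univ).toReal := Measure.setIntegral_toReal_rnDeriv_le (measure_ne_top _ _)
      _ ≤ 1 := by simpa using ENNReal.toReal_mono ENNReal.one_ne_top hμ1
  have : Real.exp (- ∫ x, llr ν μ x ∂ν) ≤ 1 := by
    rw [← integral_neg] at *
    exact h_jensen.trans h_le_one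
  have := Real.exp_le_one_iff.mp this
  linarith

/-- Donsker–Varadhan: `log ∫ e^f dμ = sup_ν ( ∫ f dν − S(ν | μ) )`, the supremum being over
all Borel probability measures `ν`, where a term with `S(ν | μ) = ∞` contributes `−∞`. -/
theorem donsker_varadhan_sup_over_measures
    {𝒳 : Type*} [TopologicalSpace 𝒳] [PolishSpace 𝒳] [MeasurableSpace 𝒳] [BorelSpace 𝒳]
    (μ : ProbabilityMeasure 𝒳) (f : BoundedContinuousFunction 𝒳 ℝ) :
    (Real.log (∫ x, Real.exp (f x) ∂(μ : Measure 𝒳)) : EReal)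
      = ⨆ ν : ProbabilityMeasure 𝒳,
          (((∫ x, f x ∂(ν : Measure 𝒳) : ℝ) : EReal)
            - ((relEnt (ν : Measure 𝒳) (μ : Measure 𝒳) : ℝ≥0∞) : EReal)) := by
  classical
  set μ' : Measure 𝒳 := (μ : Measure 𝒳)
  have hf_int : Integrable (fun x ↦ Real.exp (f x)) μ' := by
    refine Integrable.mono' (integrable_const (Real.exp ‖f‖))
      (Real.continuous_exp.comp f.continuous).aestronglyMeasurable
      (ae_of_all _ fun x ↦ ?_)
    rw [Real.norm_eq_abs, Real.abs_exp]
    exact Real.exp_le_exp.mpr ((le_abs_self _).trans (f.norm_coe_le_norm x))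
  set L : ℝ := Real.log (∫ x, Real.exp (f x) ∂μ') with hL
  -- key inequality: for every admissible ν, ∫ f dν - ∫ llr ν μ dν ≤ L
  have key : ∀ (ν : Measure 𝒳) [IsProbabilityMeasure ν], ν ≪ μ' → Integrable (llr ν μ') ν →
      ∫ x, f x ∂ν - ∫ x, llr ν μ' x ∂ν ≤ L := by
    intro ν _ hac hint
    have hfν : Integrable f ν := f.integrable ν
    have h_tilt_prob : IsProbabilityMeasure (μ'.tilted f) :=
      isProbabilityMeasure_tilted hf_int
    have hac' : ν ≪ μ'.tilted f := hac.trans (absolutelyContinuous_tilted hf_int)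
    have hint' : Integrable (llr ν (μ'.tilted f)) ν :=
      MeasureTheory.integrable_llr_tilted_right hac hfν hint hf_int
    have h_eq : ∫ x, llr ν (μ'.tilted f) x ∂ν
        = ∫ x, llr ν μ' x ∂ν - ∫ x, f x ∂ν + L :=
      MeasureTheory.integral_llr_tilted_right hac hfν hf_int hint
    have h0 : (0:ℝ) ≤ ∫ x, llr ν (μ'.tilted f) x ∂ν :=
      gibbs_integral_llr_nonneg measure_univ.le hac' hint'
    linarith [h_eq ▸ h0]
  apply le_antisymm
  · -- attained at the tilted measure
    set ν₀ : Measure 𝒳 := μ'.tilted f with hν₀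
    have h_prob : IsProbabilityMeasure ν₀ := isProbabilityMeasure_tilted hf_int
    have hac : ν₀ ≪ μ' := tilted_absolutelyContinuous μ' f
    have h_llr : llr ν₀ μ' =ᵐ[ν₀] fun x ↦ f x - L := by
      have h1 : llr ν₀ μ' =ᵐ[μ'] fun x ↦ f x - L + llr μ' μ' x :=
        llr_tilted_left Measure.AbsolutelyContinuous.rfl hf_int
          f.continuous.measurable.aemeasurable
      have h2 : llr μ' μ' =ᵐ[μ'] fun _ ↦ 0 := by
        filter_upwards [Measure.rnDeriv_self μ'] with x hx
        simp [llr, hx]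
      have h3 : llr ν₀ μ' =ᵐ[μ'] fun x ↦ f x - L := by
        filter_upwards [h1, h2] with x hx1 hx2
        simp [hx1, hx2]
      exact hac.ae_le h3
    have hint : Integrable (llr ν₀ μ') ν₀ :=
      (integrable_congr h_llr).mpr ((f.integrable ν₀).sub (integrable_const L))
    have h_int_llr : ∫ x, llr ν₀ μ' x ∂ν₀ = ∫ x, f x ∂ν₀ - L := by
      rw [integral_congr_ae h_llr, integral_sub (f.integrable ν₀) (integrable_const L)]
      simp
    have h_nonneg : (0:ℝ) ≤ ∫ x, f x ∂ν₀ - L :=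
      h_int_llr ▸ gibbs_integral_llr_nonneg measure_univ.le hac hint
    have h_relEnt : relEnt ν₀ μ' = ENNReal.ofReal (∫ x, f x ∂ν₀ - L) := by
      rw [relEnt, if_pos ⟨hac, hint⟩, h_int_llr]
    refine le_trans ?_ (le_iSup _ (⟨ν₀, h_prob⟩ : ProbabilityMeasure 𝒳))
    simp only [ProbabilityMeasure.coe_mk, h_relEnt]
    rw [EReal.coe_ennreal_ofReal, max_eq_left h_nonneg, ← EReal.coe_sub]
    norm_num
  · refine iSup_le fun ν ↦ ?_
    by_cases h : (ν : Measure 𝒳) ≪ μ' ∧ Integrable (llr (ν : Measure 𝒳) μ') (ν : Measure 𝒳)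
    · obtain ⟨hac, hint⟩ := h
      have h_nonneg : (0:ℝ) ≤ ∫ x, llr (ν : Measure 𝒳) μ' x ∂(ν : Measure 𝒳) :=
        gibbs_integral_llr_nonneg measure_univ.le hac hint
      rw [relEnt, if_pos ⟨hac, hint⟩, EReal.coe_ennreal_ofReal, max_eq_left h_nonneg,
        ← EReal.coe_sub]
      exact_mod_cast key (ν : Measure 𝒳) hac hint
    · rw [relEnt, if_neg h]
      rw [EReal.coe_ennreal_top]
      simp
end

section
/- Let 𝒳 be a Polish space and let μ, ν be Borel probability measures on 𝒳. Then S(ν | μ) = sup over f ∈ C_b(𝒳) of ( ∫ f dν − log ∫ e^f dμ ), as an equality in [0,∞]. -/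
/-!
Write `D(f) = ∫ f dν - log ∫ eᶠ dμ`. For `μ_f ∝ eᶠ μ` one has `S(ν | μ) - D(f) = S(ν | μ_f) ≥ 0`
by Gibbs' inequality, which gives `≥`.

For `≤`, bounded measurable `f` suffice: `D` is continuous in `L¹(μ + ν)` on uniformly bounded
functions, and `C_b(𝒳)` is dense there (clamping keeps the bound). If `ν` is not `≪ μ`, multiples
of the indicator of a `μ`-null set charged by `ν` make `D` unbounded. If `ν = ρ μ`, let `fₙ` be
`log ρ` with `ρ` clamped to `[e⁻ⁿ, eⁿ]`. Since `log x ≤ x - 1`,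
`D(fₙ) ≥ ∫ (ρ fₙ + 1 - e^{fₙ}) dμ`, and the integrand increases to `ρ log ρ + 1 - ρ`, whose
integral is `S(ν | μ)`; conclude by monotone convergence.
-/

open MeasureTheory Filter Topology
open scoped ENNReal NNReal

open Real InformationTheory TopologicalSpace
open scoped BoundedContinuousFunction

section

variable {𝒳 : Type*} [MeasurableSpace 𝒳] {μ ν : Measure 𝒳}

noncomputable def donskerVaradhan (ν μ : Measure 𝒳) (f : 𝒳 → ℝ) : ℝ :=
  ∫ x, f x ∂ν - log (∫ x, exp (f x) ∂μ)

lemma relEnt_eq_klDiv [IsProbabilityMeasure μ] [IsProbabilityMeasure ν] :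
    relEnt ν μ = klDiv ν μ := by
  by_cases h : ν ≪ μ ∧ Integrable (llr ν μ) ν
  · simp [relEnt, h, klDiv_of_ac_of_integrable h.1 h.2]
  · rw [relEnt, if_neg h, eq_comm, klDiv_eq_top_iff]
    exact fun hνμ h_int ↦ h ⟨hνμ, h_int⟩

lemma integrable_of_abs_le [IsFiniteMeasure μ] {f : 𝒳 → ℝ} {C : ℝ} (hf : Measurable f)
    (hfC : ∀ x, |f x| ≤ C) : Integrable f μ :=
  .of_bound hf.aestronglyMeasurable C (ae_of_all _ hfC)

lemma integrable_exp_of_abs_le [IsFiniteMeasure μ] {f : 𝒳 → ℝ} {C : ℝ} (hf : Measurable f)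
    (hfC : ∀ x, |f x| ≤ C) : Integrable (fun x ↦ exp (f x)) μ :=
  .of_bound hf.exp.aestronglyMeasurable (exp C) (ae_of_all _ fun x ↦ by
    simpa [abs_of_pos (exp_pos _)] using exp_le_exp.2 (le_of_abs_le (hfC x)))

lemma donskerVaradhan_le_integral_llr [IsFiniteMeasure μ] [NeZero μ] [IsProbabilityMeasure ν]
    (hνμ : ν ≪ μ) (h_int : Integrable (llr ν μ) ν) {f : 𝒳 → ℝ} (hfν : Integrable f ν)
    (hfμ : Integrable (fun x ↦ exp (f x)) μ) :
    donskerVaradhan ν μ f ≤ ∫ x, llr ν μ x ∂ν := by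
  have := isProbabilityMeasure_tilted hfμ
  have gibbs := integral_llr_add_sub_measure_univ_nonneg
    (hνμ.trans (absolutelyContinuous_tilted hfμ)) (integrable_llr_tilted_right hνμ hfν h_int hfμ)
  rw [integral_llr_tilted_right hνμ hfν hfμ h_int] at gibbs
  simp only [probReal_univ] at gibbs
  rw [donskerVaradhan]
  linarith

lemma coe_donskerVaradhan_le_klDiv [IsProbabilityMeasure μ] [IsProbabilityMeasure ν]
    {f : 𝒳 → ℝ} (hfν : Integrable f ν) (hfμ : Integrable (fun x ↦ exp (f x)) μ) :
    (donskerVaradhan ν μ f : EReal) ≤ klDiv ν μ := by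
  by_cases h : ν ≪ μ ∧ Integrable (llr ν μ) ν
  · rw [klDiv_of_ac_of_integrable h.1 h.2, EReal.coe_ennreal_ofReal]
    simp only [probReal_univ, add_sub_cancel_right]
    exact EReal.coe_le_coe_iff.2
      ((donskerVaradhan_le_integral_llr h.1 h.2 hfν hfμ).trans (le_max_left _ _))
  · rw [klDiv_eq_top_iff.2 fun hνμ h_int ↦ h ⟨hνμ, h_int⟩]
    exact le_top

lemma exp_sub_exp_le_of_le {a b C : ℝ} (ha : a ≤ C) : exp a - exp b ≤ exp C * |a - b| :=
  calc exp a - exp b = exp a * (1 - exp (b - a)) := by rw [mul_sub, ← exp_add]; ring_nf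
    _ ≤ exp a * |a - b| := by
      gcongr
      linarith [add_one_le_exp (b - a), le_abs_self (a - b)]
    _ ≤ exp C * |a - b| := by gcongr

lemma log_integral_exp_sub_log_integral_exp_le [IsProbabilityMeasure μ] {f g : 𝒳 → ℝ} {C : ℝ}
    (hf : Measurable f) (hg : Measurable g) (hfC : ∀ x, |f x| ≤ C) (hgC : ∀ x, |g x| ≤ C) :
    log (∫ x, exp (g x) ∂μ) - log (∫ x, exp (f x) ∂μ) ≤ exp (2 * C) * ∫ x, |f x - g x| ∂μ := by
  have hef := integrable_exp_of_abs_le (μ := μ) hf hfC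
  have heg := integrable_exp_of_abs_le (μ := μ) hg hgC
  set Y := ∫ x, exp (f x) ∂μ
  set D := ∫ x, |f x - g x| ∂μ
  have hY : exp (-C) ≤ Y := by
    simpa using integral_mono (integrable_const (exp (-C))) hef
      fun x ↦ exp_le_exp.2 (neg_le_of_abs_le (hfC x))
  have hYpos : 0 < Y := (exp_pos _).trans_le hY
  have hXY : ∫ x, exp (g x) ∂μ - Y ≤ exp C * D := by
    rw [← integral_sub heg hef, ← integral_const_mul]
    refine integral_mono (heg.sub hef) ?_ fun x ↦ ?_
    · exact ((integrable_of_abs_le hf hfC).sub (integrable_of_abs_le hg hgC)).abs.const_mul _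
    · simpa [abs_sub_comm] using exp_sub_exp_le_of_le (b := f x) (le_of_abs_le (hgC x))
  have hD : 0 ≤ exp C * D := by positivity
  calc log (∫ x, exp (g x) ∂μ) - log Y ≤ (∫ x, exp (g x) ∂μ) / Y - 1 := by
        rw [← log_div (integral_exp_pos heg).ne' hYpos.ne']
        exact log_le_sub_one_of_pos (div_pos (integral_exp_pos heg) hYpos)
    _ ≤ exp C * D * exp C := by
        rw [div_sub_one hYpos.ne', div_le_iff₀ hYpos]
        have : exp C * exp (-C) = 1 := by rw [← exp_add, add_neg_cancel, exp_zero]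
        nlinarith [mul_le_mul_of_nonneg_left hY (mul_nonneg hD (exp_pos C).le)]
    _ = exp (2 * C) * D := by rw [two_mul, exp_add]; ring

lemma donskerVaradhan_sub_le [IsProbabilityMeasure μ] [IsFiniteMeasure ν] {f g : 𝒳 → ℝ} {C : ℝ}
    (hf : Measurable f) (hg : Measurable g) (hfC : ∀ x, |f x| ≤ C) (hgC : ∀ x, |g x| ≤ C) :
    donskerVaradhan ν μ f - donskerVaradhan ν μ g
      ≤ ∫ x, |f x - g x| ∂ν + exp (2 * C) * ∫ x, |f x - g x| ∂μ := by
  have hν : ∫ x, f x ∂ν - ∫ x, g x ∂ν ≤ ∫ x, |f x - g x| ∂ν := by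
    rw [← integral_sub (integrable_of_abs_le hf hfC) (integrable_of_abs_le hg hgC)]
    exact (le_abs_self _).trans (abs_integral_le_integral_abs)
  have hμ := log_integral_exp_sub_log_integral_exp_le (μ := μ) hf hg hfC hgC
  rw [donskerVaradhan, donskerVaradhan]
  linarith

lemma exists_boundedContinuous_abs_le_integral_abs_sub_le [TopologicalSpace 𝒳]
    [PseudoMetrizableSpace 𝒳] [BorelSpace 𝒳] (ρ : Measure 𝒳) [IsFiniteMeasure ρ] {f : 𝒳 → ℝ}
    {C : ℝ} (hf : Measurable f) (hfC : ∀ x, |f x| ≤ C) {δ : ℝ} (hδ : 0 < δ) :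
    ∃ g : 𝒳 →ᵇ ℝ, (∀ x, |g x| ≤ C) ∧ ∫ x, |f x - g x| ∂ρ ≤ δ := by
  have hfρ := integrable_of_abs_le (μ := ρ) hf hfC
  obtain ⟨g, hfg, hg⟩ := hfρ.exists_boundedContinuous_integral_sub_le hδ
  refine ⟨.const 𝒳 (-C) ⊔ (.const 𝒳 C ⊓ g), fun x ↦ ?_, ?_⟩
  · have hC : -C ≤ C := by linarith [(abs_nonneg (f x)).trans (hfC x)]
    exact abs_le.2 ⟨le_max_left _ _, max_le hC (min_le_left _ _)⟩
  refine (integral_mono_of_nonneg (ae_of_all _ fun x ↦ abs_nonneg _) (hfρ.sub hg).norm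
    (ae_of_all _ fun x ↦ ?_)).trans hfg
  have hC : -C ≤ C := by linarith [(abs_nonneg (f x)).trans (hfC x)]
  have hfx : max (-C) (min C (f x)) = f x := by
    rw [min_eq_right (abs_le.1 (hfC x)).2, max_eq_right (abs_le.1 (hfC x)).1]
  have := Set.abs_projIcc_sub_projIcc hC (c := f x) (d := g x)
  rw [Set.coe_projIcc, Set.coe_projIcc, hfx] at this
  simpa using this

lemma EReal.coe_le_of_forall_pos_sub_le {r : ℝ} {S : EReal}
    (h : ∀ ε > 0, ((r - ε : ℝ) : EReal) ≤ S) : (r : EReal) ≤ S := by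
  have hlim : Tendsto (fun ε : ℝ ↦ ((r - ε : ℝ) : EReal)) (𝓝[>] 0) (𝓝 r) :=
    EReal.tendsto_coe.2 <| by
      simpa using ((continuous_sub_left r).tendsto 0).mono_left nhdsWithin_le_nhds
  exact le_of_tendsto hlim (eventually_nhdsWithin_of_forall h)

lemma coe_donskerVaradhan_le_iSup_boundedContinuous [TopologicalSpace 𝒳]
    [PseudoMetrizableSpace 𝒳] [BorelSpace 𝒳] [IsProbabilityMeasure μ] [IsFiniteMeasure ν]
    {f : 𝒳 → ℝ} {C : ℝ} (hf : Measurable f) (hfC : ∀ x, |f x| ≤ C) :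
    (donskerVaradhan ν μ f : EReal) ≤ ⨆ g : 𝒳 →ᵇ ℝ, (donskerVaradhan ν μ g : EReal) := by
  refine EReal.coe_le_of_forall_pos_sub_le fun ε hε ↦ ?_
  have hK : 0 < 1 + exp (2 * C) := by positivity
  obtain ⟨g, hgC, hfg⟩ :=
    exists_boundedContinuous_abs_le_integral_abs_sub_le (ν + μ) hf hfC (div_pos hε hK)
  have hg := g.continuous.measurable
  have hfg_int : ∀ (ρ : Measure 𝒳) [IsFiniteMeasure ρ], Integrable (fun x ↦ |f x - g x|) ρ :=
    fun ρ _ ↦ ((integrable_of_abs_le hf hfC).sub (integrable_of_abs_le hg hgC)).abs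
  rw [integral_add_measure (hfg_int ν) (hfg_int μ), le_div_iff₀ hK] at hfg
  have hνpos : 0 ≤ ∫ x, |f x - g x| ∂ν := integral_nonneg fun _ ↦ abs_nonneg _
  have hμpos : 0 ≤ ∫ x, |f x - g x| ∂μ := integral_nonneg fun _ ↦ abs_nonneg _
  have hdiff := donskerVaradhan_sub_le (ν := ν) (μ := μ) hf hg hfC hgC
  refine le_iSup_of_le g (EReal.coe_le_coe_iff.2 ?_)
  nlinarith [exp_pos (2 * C)]

/-- Concave in `t > 0`, with maximum `klFun ρ` at `t = ρ`. -/
noncomputable def klApprox (ρ t : ℝ) : ℝ := ρ * log t + 1 - t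

lemma klApprox_self (ρ : ℝ) : klApprox ρ ρ = klFun ρ := by
  simp [klApprox, klFun_apply]

lemma klApprox_one (ρ : ℝ) : klApprox ρ 1 = 0 := by
  simp [klApprox]

lemma klApprox_exp (ρ y : ℝ) : klApprox ρ (exp y) = ρ * y + 1 - exp y := by
  simp [klApprox]

lemma klApprox_le_add_mul_sub {ρ p s : ℝ} (hρ : 0 ≤ ρ) (hp : 0 < p) (hs : 0 < s) :
    klApprox ρ s ≤ klApprox ρ p + (ρ / p - 1) * (s - p) := by
  have h := mul_le_mul_of_nonneg_left (log_le_sub_one_of_pos (div_pos hs hp)) hρ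
  rw [log_div hs.ne' hp.ne', mul_sub, mul_sub, mul_one, mul_div_assoc'] at h
  have : ρ * s / p - ρ = ρ / p * (s - p) := by field_simp
  simp only [klApprox]
  nlinarith

lemma klApprox_le_klApprox_clamp {ρ l u s : ℝ} (hρ : 0 ≤ ρ) (hl : 0 < l) (hs : s ∈ Set.Icc l u) :
    klApprox ρ s ≤ klApprox ρ (max l (min u ρ)) := by
  set p := max l (min u ρ)
  have hp : 0 < p := hl.trans_le (le_max_left _ _)
  have hproj : (ρ - p) * (s - p) ≤ 0 := by
    obtain ⟨hls, hsu⟩ := hs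
    rcases le_total ρ l with h | h
    · rw [show p = l by simp [p, (min_le_right u ρ).trans h]]
      nlinarith
    rcases le_total u ρ with h' | h'
    · rw [show p = u by simp [p, h', hls.trans hsu]]
      nlinarith
    · rw [show p = ρ by simp [p, h, h']]
      simp
  refine (klApprox_le_add_mul_sub hρ hp (hl.trans_le hs.1)).trans (add_le_of_nonpos_right ?_)
  rw [div_sub_one hp.ne', div_mul_eq_mul_div]
  exact div_nonpos_of_nonpos_of_nonneg hproj hp.le

noncomputable def expClamp (n : ℕ) (t : ℝ) : ℝ := max (exp (-n)) (min (exp n) t)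

lemma expClamp_mem_Icc {m n : ℕ} (hmn : m ≤ n) (t : ℝ) :
    expClamp m t ∈ Set.Icc (exp (-n)) (exp n) := by
  have hm : (m : ℝ) ≤ n := by exact_mod_cast hmn
  refine ⟨(exp_le_exp.2 (by linarith)).trans (le_max_left _ _), max_le ?_ ?_⟩
  · exact exp_le_exp.2 (by linarith [(Nat.cast_nonneg n : (0 : ℝ) ≤ n)])
  · exact (min_le_left _ _).trans (exp_le_exp.2 hm)

lemma klApprox_expClamp_nonneg {ρ : ℝ} (hρ : 0 ≤ ρ) (n : ℕ) : 0 ≤ klApprox ρ (expClamp n ρ) := by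
  simpa [klApprox_one, expClamp] using
    klApprox_le_klApprox_clamp hρ (exp_pos _) (expClamp_mem_Icc (Nat.zero_le n) 1)

lemma monotone_klApprox_expClamp {ρ : ℝ} (hρ : 0 ≤ ρ) :
    Monotone fun n : ℕ ↦ klApprox ρ (expClamp n ρ) :=
  fun _ _ hmn ↦ klApprox_le_klApprox_clamp hρ (exp_pos _) (expClamp_mem_Icc hmn ρ)

lemma tendsto_klApprox_expClamp {ρ : ℝ} (hρ : 0 ≤ ρ) :
    Tendsto (fun n : ℕ ↦ klApprox ρ (expClamp n ρ)) atTop (𝓝 (klFun ρ)) := by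
  have h_neg : Tendsto (fun n : ℕ ↦ exp (-n)) atTop (𝓝 0) :=
    tendsto_exp_neg_atTop_nhds_zero.comp tendsto_natCast_atTop_atTop
  rcases hρ.eq_or_lt with rfl | hρ
  · simpa [klApprox, expClamp, klFun_zero, (exp_pos _).le] using
      (tendsto_const_nhds (x := (1 : ℝ))).sub h_neg
  have h_low : ∀ᶠ n : ℕ in atTop, exp (-n) ≤ ρ := h_neg.eventually (eventually_le_nhds hρ)
  have h_up : ∀ᶠ n : ℕ in atTop, ρ ≤ exp n :=
    (tendsto_exp_atTop.comp tendsto_natCast_atTop_atTop).eventually_ge_atTop ρ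
  refine tendsto_const_nhds.congr' ?_
  filter_upwards [h_low, h_up] with n h_low h_up
  rw [expClamp, min_eq_right h_up, max_eq_right h_low, klApprox_self]

lemma tendsto_lintegral_klApprox_expClamp_rnDeriv [IsFiniteMeasure μ] [IsFiniteMeasure ν]
    (hνμ : ν ≪ μ) :
    Tendsto (fun n : ℕ ↦ ∫⁻ x, ENNReal.ofReal
        (klApprox (ν.rnDeriv μ x).toReal (expClamp n (ν.rnDeriv μ x).toReal)) ∂μ)
      atTop (𝓝 (klDiv ν μ)) := by
  rw [klDiv_eq_lintegral_klFun_of_ac hνμ]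
  have hρ := (ν.measurable_rnDeriv μ).ennreal_toReal
  refine lintegral_tendsto_of_tendsto_of_monotone (fun n ↦ ?_)
    (ae_of_all _ fun x ↦
      ENNReal.ofReal_mono.comp (monotone_klApprox_expClamp ENNReal.toReal_nonneg))
    (ae_of_all _ fun x ↦ ENNReal.tendsto_ofReal (tendsto_klApprox_expClamp ENNReal.toReal_nonneg))
  simp only [klApprox, expClamp]
  fun_prop

/-- Clamping the density rather than `llr ν μ` makes this `-n`, not the junk value `0`, where
`dν/dμ` vanishes. -/
noncomputable def truncatedLlr (ν μ : Measure 𝒳) (n : ℕ) (x : 𝒳) : ℝ :=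
  log (expClamp n (ν.rnDeriv μ x).toReal)

lemma measurable_truncatedLlr (ν μ : Measure 𝒳) (n : ℕ) : Measurable (truncatedLlr ν μ n) := by
  have := (ν.measurable_rnDeriv μ).ennreal_toReal
  unfold truncatedLlr expClamp
  fun_prop

lemma exp_truncatedLlr (ν μ : Measure 𝒳) (n : ℕ) (x : 𝒳) :
    exp (truncatedLlr ν μ n x) = expClamp n (ν.rnDeriv μ x).toReal :=
  exp_log ((exp_pos _).trans_le (le_max_left _ _))

lemma abs_truncatedLlr_le (ν μ : Measure 𝒳) (n : ℕ) (x : 𝒳) : |truncatedLlr ν μ n x| ≤ n := by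
  obtain ⟨h_low, h_up⟩ := expClamp_mem_Icc le_rfl (ν.rnDeriv μ x).toReal
  rw [← exp_truncatedLlr, exp_le_exp] at h_low h_up
  exact abs_le.2 ⟨h_low, h_up⟩

lemma integrable_klApprox_exp [IsFiniteMeasure μ] [IsFiniteMeasure ν] (hνμ : ν ≪ μ) {f : 𝒳 → ℝ}
    (hfν : Integrable f ν) (hfμ : Integrable (fun x ↦ exp (f x)) μ) :
    Integrable (fun x ↦ klApprox (ν.rnDeriv μ x).toReal (exp (f x))) μ := by
  simp only [klApprox_exp]
  exact (((integrable_toReal_rnDeriv_mul_iff hνμ).2 hfν).add (integrable_const 1)).sub hfμ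

lemma integral_klApprox_exp_le_donskerVaradhan [IsProbabilityMeasure μ] [IsFiniteMeasure ν]
    (hνμ : ν ≪ μ) {f : 𝒳 → ℝ} (hfν : Integrable f ν) (hfμ : Integrable (fun x ↦ exp (f x)) μ) :
    ∫ x, klApprox (ν.rnDeriv μ x).toReal (exp (f x)) ∂μ ≤ donskerVaradhan ν μ f := by
  simp only [klApprox_exp]
  have hρf := (integrable_toReal_rnDeriv_mul_iff hνμ).2 hfν
  have hρf1 : Integrable (fun x ↦ (ν.rnDeriv μ x).toReal * f x + 1) μ :=
    hρf.add (integrable_const 1)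
  rw [integral_sub hρf1 hfμ, integral_add hρf (integrable_const 1),
    integral_toReal_rnDeriv_mul hνμ, donskerVaradhan]
  have := log_le_sub_one_of_pos (integral_exp_pos hfμ)
  simp only [integral_const, probReal_univ, smul_eq_mul, one_mul]
  linarith

lemma klDiv_le_iSup_donskerVaradhan_truncatedLlr [IsProbabilityMeasure μ] [IsFiniteMeasure ν]
    (hνμ : ν ≪ μ) :
    klDiv ν μ ≤ ⨆ n : ℕ, ENNReal.ofReal (donskerVaradhan ν μ (truncatedLlr ν μ n)) := by
  refine le_of_tendsto' (tendsto_lintegral_klApprox_expClamp_rnDeriv hνμ) fun n ↦ le_iSup_of_le n ?_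
  have hf := measurable_truncatedLlr ν μ n
  have hfC := abs_truncatedLlr_le ν μ n
  have hfν := integrable_of_abs_le (μ := ν) hf hfC
  have hfμ := integrable_exp_of_abs_le (μ := μ) hf hfC
  have h_int := integrable_klApprox_exp hνμ hfν hfμ
  have h_le := integral_klApprox_exp_le_donskerVaradhan hνμ hfν hfμ
  simp only [exp_truncatedLlr] at h_int h_le
  rw [← ofReal_integral_eq_lintegral_ofReal h_int
    (ae_of_all _ fun x ↦ klApprox_expClamp_nonneg ENNReal.toReal_nonneg n)]
  exact ENNReal.ofReal_le_ofReal h_le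

lemma exists_bdd_donskerVaradhan_ge_of_not_absolutelyContinuous [IsProbabilityMeasure μ]
    [IsFiniteMeasure ν] (hνμ : ¬ ν ≪ μ) (r : ℝ) :
    ∃ (f : 𝒳 → ℝ) (C : ℝ), Measurable f ∧ (∀ x, |f x| ≤ C) ∧ r ≤ donskerVaradhan ν μ f := by
  obtain ⟨s, hs, hμs, hνs⟩ : ∃ s, MeasurableSet s ∧ μ s = 0 ∧ ν s ≠ 0 := by
    by_contra! h
    exact hνμ (Measure.AbsolutelyContinuous.mk h)
  set c := r / ν.real s
  refine ⟨s.indicator fun _ ↦ c, |c|, measurable_const.indicator hs, fun x ↦ ?_, ?_⟩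
  · by_cases hx : x ∈ s <;> simp [hx]
  have hexp : (fun x ↦ exp (s.indicator (fun _ ↦ c) x)) =ᵐ[μ] fun _ ↦ 1 := by
    filter_upwards [measure_eq_zero_iff_ae_notMem.1 hμs] with x hx
    simp [hx]
  have hνs' : ν.real s ≠ 0 := (measureReal_ne_zero_iff).2 hνs
  rw [donskerVaradhan, integral_congr_ae hexp, integral_indicator_const _ hs]
  simp [c, mul_div_cancel₀ _ hνs']

lemma coe_klDiv_le_iSup_donskerVaradhan [TopologicalSpace 𝒳] [PseudoMetrizableSpace 𝒳]
    [BorelSpace 𝒳] [IsProbabilityMeasure μ] [IsFiniteMeasure ν] (hνμ : ν ≪ μ) :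
    (klDiv ν μ : EReal) ≤ ⨆ g : 𝒳 →ᵇ ℝ, (donskerVaradhan ν μ g : EReal) := by
  have hS : 0 ≤ ⨆ g : 𝒳 →ᵇ ℝ, (donskerVaradhan ν μ g : EReal) :=
    le_iSup_of_le 0 (by simp [donskerVaradhan])
  rw [← EReal.coe_toENNReal hS, EReal.coe_ennreal_le_coe_ennreal_iff]
  refine (klDiv_le_iSup_donskerVaradhan_truncatedLlr hνμ).trans (iSup_le fun n ↦ ?_)
  rw [← EReal.real_coe_toENNReal]
  exact EReal.toENNReal_le_toENNReal (coe_donskerVaradhan_le_iSup_boundedContinuous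
    (measurable_truncatedLlr ν μ n) (abs_truncatedLlr_le ν μ n))

lemma iSup_donskerVaradhan_eq_top_of_not_absolutelyContinuous [TopologicalSpace 𝒳]
    [PseudoMetrizableSpace 𝒳] [BorelSpace 𝒳] [IsProbabilityMeasure μ] [IsFiniteMeasure ν]
    (hνμ : ¬ ν ≪ μ) : ⨆ g : 𝒳 →ᵇ ℝ, (donskerVaradhan ν μ g : EReal) = ⊤ := by
  refine (EReal.eq_top_iff_forall_lt _).2 fun r ↦ ?_
  obtain ⟨f, C, hf, hfC, hr⟩ :=
    exists_bdd_donskerVaradhan_ge_of_not_absolutelyContinuous hνμ (r + 1)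
  exact (EReal.coe_lt_coe_iff.2 (by linarith)).trans_le
    (coe_donskerVaradhan_le_iSup_boundedContinuous hf hfC)

end

/-- Donsker–Varadhan: `S(ν | μ) = sup_{f ∈ C_b(𝒳)} ( ∫ f dν − log ∫ e^f dμ )`,
as an equality in `[0, ∞]` (formulated in the extended reals). -/
theorem relEnt_eq_sup_over_boundedContinuousFunctions
    {𝒳 : Type*} [TopologicalSpace 𝒳] [PolishSpace 𝒳] [MeasurableSpace 𝒳] [BorelSpace 𝒳]
    (μ ν : ProbabilityMeasure 𝒳) :
    ((relEnt (ν : Measure 𝒳) (μ : Measure 𝒳) : ℝ≥0∞) : EReal)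
      = ⨆ f : BoundedContinuousFunction 𝒳 ℝ,
          (((∫ x, f x ∂(ν : Measure 𝒳) : ℝ) : EReal)
            - ((Real.log (∫ x, Real.exp (f x) ∂(μ : Measure 𝒳)) : ℝ) : EReal)) := by
  simp only [← EReal.coe_sub, relEnt_eq_klDiv]
  change _ = ⨆ f : 𝒳 →ᵇ ℝ, (donskerVaradhan ν μ f : EReal)
  refine le_antisymm ?_ (iSup_le fun f ↦ ?_)
  · by_cases hνμ : (ν : Measure 𝒳) ≪ μ
    · exact coe_klDiv_le_iSup_donskerVaradhan hνμ
    · rw [iSup_donskerVaradhan_eq_top_of_not_absolutelyContinuous hνμ]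
      exact le_top
  · have hfC : ∀ x, |f x| ≤ ‖f‖ := f.norm_coe_le_norm
    exact coe_donskerVaradhan_le_klDiv (f.integrable _)
      (integrable_exp_of_abs_le f.continuous.measurable hfC)
end

section
/- For each n ∈ ℕ let 𝒳_n be a Polish space, let A_n be a set of Borel probability measures on 𝒳_n, and let r_n > 0 with r_n → ∞. Suppose that for each a > 0 there exist compact sets K_n^a ⊆ 𝒳_n (one for each n) such that limsup_n (1/r_n) log sup_{μ ∈ A_n} μ((K_n^a)^c) ≤ −a. Let B_n be sets of Borel probability measures on 𝒳_n such that there is a constant M ≥ 0 with sup_n sup_{ν ∈ B_n} inf_{μ ∈ A_n} (1/r_n) S(ν | μ) ≤ M. Then for every ε > 0 there is a constant a = a(ε) > 0 such that limsup_n sup_{ν ∈ B_n} ν((K_n^a)^c) ≤ 2ε. -/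
open MeasureTheory Filter Topology
open scoped ENNReal NNReal

/-!
Integrating Young's inequality `x y ≤ x log x + exp (y - 1)` against `μ`, with `x = dν/dμ` and
`y = t · 𝟙_C`, gives `t ν(C) ≤ S(ν | μ) + exp (t - 1) μ(C) + 1`. For large `n`, exponential
tightness gives `μ((K a n)ᶜ) ≤ exp (-t)` with `t = a r_n / 2` for every `μ ∈ A_n`, and every
`ν ∈ B_n` has some `μ ∈ A_n` with `S(ν | μ) ≤ (M + 1) r_n`; hence
`ν((K a n)ᶜ) ≤ ((M + 1) r_n + 2) / t ≤ 4 (M + 1) / a`, which is `2ε` for `a = 2 (M + 1) / ε`.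
-/

lemma Real.mul_le_mul_log_add_exp_sub_one {x : ℝ} (hx : 0 ≤ x) (y : ℝ) :
    x * y ≤ x * Real.log x + Real.exp (y - 1) := by
  rcases hx.eq_or_lt with rfl | hx
  · simpa using (Real.exp_pos _).le
  have h := mul_le_mul_of_nonneg_left (Real.add_one_le_exp (y - Real.log x - 1)) hx.le
  rw [show y - Real.log x - 1 = (y - 1) - Real.log x by ring, Real.exp_sub, Real.exp_log hx,
    mul_div_cancel₀ _ hx.ne'] at h
  linarith

section RelativeEntropy

variable {α : Type*} [MeasurableSpace α] {ν μ : Measure α}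

lemma integral_le_integral_llr_add_integral_exp_sub_one [SigmaFinite ν] [SigmaFinite μ]
    (hac : ν ≪ μ) (hllr : Integrable (llr ν μ) ν) {f : α → ℝ} (hf : Integrable f ν)
    (hexp : Integrable (fun x ↦ Real.exp (f x - 1)) μ) :
    ∫ x, f x ∂ν ≤ ∫ x, llr ν μ x ∂ν + ∫ x, Real.exp (f x - 1) ∂μ := by
  have hllr' := (integrable_rnDeriv_smul_iff hac).mpr hllr
  rw [← integral_rnDeriv_smul hac, ← integral_rnDeriv_smul hac, ← integral_add hllr' hexp]
  refine integral_mono ((integrable_rnDeriv_smul_iff hac).mpr hf) (hllr'.add hexp) fun x ↦ ?_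
  exact Real.mul_le_mul_log_add_exp_sub_one ENNReal.toReal_nonneg (f x)

lemma mul_measureReal_le_integral_llr_add [IsFiniteMeasure ν] [IsProbabilityMeasure μ]
    (hac : ν ≪ μ) (hllr : Integrable (llr ν μ) ν) {C : Set α} (hC : MeasurableSet C) (t : ℝ) :
    t * ν.real C ≤ ∫ x, llr ν μ x ∂ν + Real.exp (t - 1) * μ.real C + 1 := by
  have hexp_eq : (fun x ↦ Real.exp (C.indicator (fun _ ↦ t) x - 1)) =
      fun x ↦ C.indicator (fun _ ↦ Real.exp (t - 1) - Real.exp (-1)) x + Real.exp (-1) := by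
    funext x
    by_cases hx : x ∈ C <;> simp [hx]
  have hind := (integrable_const (μ := μ) (Real.exp (t - 1) - Real.exp (-1))).indicator hC
  have key := integral_le_integral_llr_add_integral_exp_sub_one hac hllr
    ((integrable_const t).indicator hC) (hexp_eq ▸ hind.add (integrable_const _))
  rw [hexp_eq, integral_add hind (integrable_const _), integral_indicator_const _ hC,
    integral_indicator_const _ hC, integral_const] at key
  simp only [smul_eq_mul, probReal_univ, one_mul] at key
  have hμC : 0 ≤ μ.real C := measureReal_nonneg
  have hexp_le : Real.exp (-1) ≤ 1 := Real.exp_le_one_iff.mpr (by norm_num)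
  nlinarith [Real.exp_pos (-1)]

lemma measureReal_le_of_relEnt_le [IsProbabilityMeasure ν] [IsProbabilityMeasure μ]
    {C : Set α} {t R : ℝ} (ht : 0 < t) (hR : 0 ≤ R)
    (hent : relEnt ν μ ≤ ENNReal.ofReal R) (hμC : μ.real C ≤ Real.exp (-t)) :
    ν.real C ≤ (R + 2) / t := by
  -- `C` need not be measurable: pass to a measurable hull for `μ`, which can only enlarge `ν C`.
  refine (measureReal_mono (subset_toMeasurable μ C)).trans ?_
  rw [measureReal_def, ← measure_toMeasurable, ← measureReal_def] at hμC
  obtain ⟨hac, hllr⟩ : ν ≪ μ ∧ Integrable (llr ν μ) ν := by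
    by_contra h
    rw [relEnt, if_neg h] at hent
    exact ENNReal.ofReal_ne_top (top_le_iff.mp hent)
  rw [relEnt, if_pos ⟨hac, hllr⟩, ENNReal.ofReal_le_ofReal_iff hR] at hent
  have hexp : Real.exp (t - 1) * μ.real (toMeasurable μ C) ≤ 1 :=
    calc Real.exp (t - 1) * μ.real (toMeasurable μ C) ≤ Real.exp (t - 1) * Real.exp (-t) := by gcongr
      _ = Real.exp (-1) := by rw [← Real.exp_add]; ring_nf
      _ ≤ 1 := Real.exp_le_one_iff.mpr (by norm_num)
  rw [le_div_iff₀ ht, mul_comm]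
  linarith [mul_measureReal_le_integral_llr_add hac hllr (measurableSet_toMeasurable μ C) t]

end RelativeEntropy

lemma ENNReal.exists_le_ofReal_mul_of_biInf_le {ι : Type*} {s : Set ι} {f : ι → ℝ≥0∞}
    {c m m' : ℝ} (hc : 0 < c) (hm : m < m') (hm' : 0 < m')
    (h : ⨅ i ∈ s, ENNReal.ofReal (1 / c) * f i ≤ ENNReal.ofReal m) :
    ∃ i ∈ s, f i ≤ ENNReal.ofReal (c * m') := by
  obtain ⟨i, hi, hlt⟩ : ∃ i ∈ s, ENNReal.ofReal (1 / c) * f i < ENNReal.ofReal m' := by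
    simpa only [iInf_lt_iff, exists_prop] using
      h.trans_lt ((ENNReal.ofReal_lt_ofReal_iff hm').mpr hm)
  refine ⟨i, hi, ?_⟩
  calc f i = ENNReal.ofReal c * (ENNReal.ofReal (1 / c) * f i) := by
        rw [← mul_assoc, ← ENNReal.ofReal_mul hc.le, mul_one_div_cancel hc.ne',
          ENNReal.ofReal_one, one_mul]
    _ ≤ ENNReal.ofReal c * ENNReal.ofReal m' := by gcongr
    _ = ENNReal.ofReal (c * m') := (ENNReal.ofReal_mul hc.le).symm

lemma eventually_le_exp_of_limsup_log_lt {ι : Type*} {l : Filter ι} {r s : ι → ℝ}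
    (hr : ∀ i, 0 < r i) (hs₀ : ∀ i, 0 ≤ s i) (hs₁ : ∀ i, s i ≤ 1) {b : ℝ}
    (h : limsup (fun i ↦ 1 / r i * Real.log (s i)) l < -b) :
    ∀ᶠ i in l, s i ≤ Real.exp (-(b * r i)) := by
  have hbdd : IsBoundedUnder (· ≤ ·) l (fun i ↦ 1 / r i * Real.log (s i)) :=
    isBoundedUnder_of ⟨0, fun i ↦ mul_nonpos_of_nonneg_of_nonpos (one_div_pos.mpr (hr i)).le
      (Real.log_nonpos (hs₀ i) (hs₁ i))⟩
  filter_upwards [eventually_lt_of_limsup_lt h hbdd] with i hi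
  rw [one_div_mul_eq_div, div_lt_iff₀ (hr i)] at hi
  exact (Real.le_exp_log _).trans (Real.exp_le_exp.mpr (by linarith))

namespace ProbabilityMeasure

variable {α : Type*} [MeasurableSpace α]

lemma biSup_apply_le_one (s : Set (ProbabilityMeasure α)) (C : Set α) :
    ⨆ μ ∈ s, μ C ≤ 1 :=
  ciSup_le' fun μ ↦ ciSup_le' fun _ ↦ μ.apply_le_one C

lemma apply_le_biSup {s : Set (ProbabilityMeasure α)} {μ : ProbabilityMeasure α} (hμ : μ ∈ s)
    (C : Set α) : μ C ≤ ⨆ ν ∈ s, ν C :=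
  le_ciSup₂ (f := fun ν (_ : ν ∈ s) ↦ ν C)
    ⟨1, by rintro _ ⟨_, ⟨ν, rfl⟩, ⟨_, rfl⟩⟩; exact ν.apply_le_one C⟩ μ hμ

end ProbabilityMeasure

lemma NNReal.coe_biSup_le {ι : Type*} {s : Set ι} {f : ι → ℝ≥0} {c : ℝ} (hc : 0 ≤ c)
    (h : ∀ i ∈ s, (f i : ℝ) ≤ c) : ((⨆ i ∈ s, f i : ℝ≥0) : ℝ) ≤ c := by
  lift c to ℝ≥0 using hc
  exact_mod_cast ciSup_le' fun i ↦ ciSup_le' fun hi ↦ mod_cast h i hi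

theorem tightness_of_exponential_tightness_and_entropy_bound_general
    (𝒳 : ℕ → Type*)
    [∀ n, MeasurableSpace (𝒳 n)]
    (A B : ∀ n, Set (ProbabilityMeasure (𝒳 n)))
    (r : ℕ → ℝ) (hr : ∀ n, 0 < r n) (hrtop : Tendsto r atTop atTop)
    (K : ℝ → ∀ n, Set (𝒳 n))
    (hKexp : ∀ a > (0 : ℝ),
      Filter.limsup (fun n =>
          (1 / r n) * Real.log ((⨆ μ ∈ A n, μ ((K a n)ᶜ) : ℝ≥0) : ℝ)) atTop ≤ -a)
    (M : ℝ) (hM : 0 ≤ M)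
    (hB : ∀ n, ∀ ν ∈ B n,
      ⨅ μ ∈ A n, ENNReal.ofReal (1 / r n) * relEnt (ν : Measure (𝒳 n)) (μ : Measure (𝒳 n))
        ≤ ENNReal.ofReal M) :
    ∀ ε > (0 : ℝ), ∃ a > (0 : ℝ),
      Filter.limsup (fun n => ((⨆ ν ∈ B n, ν ((K a n)ᶜ) : ℝ≥0) : ℝ)) atTop ≤ 2 * ε := by
  intro ε hε
  set a := 2 * (M + 1) / ε
  have ha : 0 < a := by positivity
  have haε : a * ε = 2 * (M + 1) := div_mul_cancel₀ _ hε.ne'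
  refine ⟨a, ha, ?_⟩
  have hAdecay : ∀ᶠ n in atTop,
      ((⨆ μ ∈ A n, μ (K a n)ᶜ : ℝ≥0) : ℝ) ≤ Real.exp (-(a / 2 * r n)) :=
    eventually_le_exp_of_limsup_log_lt hr (fun _ ↦ NNReal.coe_nonneg _)
      (fun _ ↦ mod_cast ProbabilityMeasure.biSup_apply_le_one _ _)
      ((hKexp a ha).trans_lt (by linarith))
  refine limsup_le_of_le (isCoboundedUnder_le_of_le atTop fun _ ↦ NNReal.coe_nonneg _) ?_
  filter_upwards [hAdecay, hrtop.eventually_ge_atTop 2] with n hdecay hr2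
  refine NNReal.coe_biSup_le (by positivity) fun ν hν ↦ ?_
  obtain ⟨μ, hμ, hent⟩ :=
    ENNReal.exists_le_ofReal_mul_of_biInf_le (hr n) (lt_add_one M) (by linarith) (hB n ν hν)
  have hμC : (μ : Measure (𝒳 n)).real (K a n)ᶜ ≤ Real.exp (-(a / 2 * r n)) := by
    rw [ProbabilityMeasure.measureReal_eq_coe_coeFn]
    exact (NNReal.coe_le_coe.mpr (ProbabilityMeasure.apply_le_biSup hμ _)).trans hdecay
  rw [← ProbabilityMeasure.measureReal_eq_coe_coeFn]
  calc _ ≤ (r n * (M + 1) + 2) / (a / 2 * r n) :=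
        measureReal_le_of_relEnt_le (by have := hr n; positivity) (by have := hr n; positivity) hent hμC
    _ ≤ 2 * ε := by
        rw [div_le_iff₀ (by have := hr n; positivity)]
        nlinarith

/-- Tightness for exponentially tilted measures: if the families `A_n` are exponentially tight
at speed `r_n` (witnessed by compact sets `K a n` for each `a > 0`) and the families `B_n` have
uniformly bounded rescaled relative entropy with respect to `A_n`, then for every `ε > 0` there
is `a > 0` with `limsup_n sup_{ν ∈ B_n} ν((K a n)ᶜ) ≤ 2ε`. -/
theorem tightness_of_exponential_tightness_and_entropy_bound
    (𝒳 : ℕ → Type*) [∀ n, TopologicalSpace (𝒳 n)] [∀ n, PolishSpace (𝒳 n)]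
    [∀ n, MeasurableSpace (𝒳 n)] [∀ n, BorelSpace (𝒳 n)]
    (A B : ∀ n, Set (ProbabilityMeasure (𝒳 n)))
    (r : ℕ → ℝ) (hr : ∀ n, 0 < r n) (hrtop : Tendsto r atTop atTop)
    (K : ℝ → ∀ n, Set (𝒳 n))
    (hKcompact : ∀ a > (0 : ℝ), ∀ n, IsCompact (K a n))
    (hKexp : ∀ a > (0 : ℝ),
      Filter.limsup (fun n =>
          (1 / r n) * Real.log ((⨆ μ ∈ A n, μ ((K a n)ᶜ) : ℝ≥0) : ℝ)) atTop ≤ -a)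
    (M : ℝ) (hM : 0 ≤ M)
    (hB : ∀ n, ∀ ν ∈ B n,
      ⨅ μ ∈ A n, ENNReal.ofReal (1 / r n) * relEnt (ν : Measure (𝒳 n)) (μ : Measure (𝒳 n))
        ≤ ENNReal.ofReal M) :
    ∀ ε > (0 : ℝ), ∃ a > (0 : ℝ),
      Filter.limsup (fun n => ((⨆ ν ∈ B n, ν ((K a n)ᶜ) : ℝ≥0) : ℝ)) atTop ≤ 2 * ε :=
  tightness_of_exponential_tightness_and_entropy_bound_general 𝒳 A B r hr hrtop K hKexp M hM hB
end

section
/- Let z : [0,∞) → ℝ be bounded and measurable and let 0 < α < β. Then ∫_0^∞ z(s) τ_β(ds) = (α/β) ∫_0^∞ z(s) τ_α(ds) + (1 − α/β) ∫_0^∞ ∫_0^∞ z(s + u) τ_β(du) τ_α(ds). -/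
/-!
In rates `a = α⁻¹ > b = β⁻¹`, the characteristic functions satisfy
`b/(b - it) = (b/a)·a/(a - it) + (1 - b/a)·a/(a - it)·b/(b - it)`, so `τ_β` is the mixture
`(α/β) τ_α + (1 - α/β) (τ_α ∗ τ_β)`. Integrating `z` against this mixture, with the convolution
unfolded as an iterated integral, gives the identity.
-/

open MeasureTheory ProbabilityTheory

open Complex in
lemma charFun_add_measure {E : Type*} [NormedAddCommGroup E] [InnerProductSpace ℝ E]
    [MeasurableSpace E] [OpensMeasurableSpace E] {μ ν : Measure E}
    [IsFiniteMeasure μ] [IsFiniteMeasure ν] (t : E) :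
    charFun (μ + ν) t = charFun μ t + charFun ν t := by
  have h (ρ : Measure E) [IsFiniteMeasure ρ] :
      Integrable (fun x ↦ exp (inner ℝ x t * I)) ρ :=
    (integrable_const (1 : ℝ)).mono (by fun_prop) (by simp)
  simp only [charFun_apply]
  exact integral_add_measure (h μ) (h ν)

lemma charFun_smul_measure {E : Type*} [Inner ℝ E] [MeasurableSpace E] {μ : Measure E}
    (c : NNReal) (t : E) : charFun (c • μ) t = c * charFun μ t := by
  simp only [charFun_apply, integral_smul_nnreal_measure, NNReal.smul_def, Complex.real_smul]

lemma ofReal_sub_ofReal_mul_I_ne_zero {r : ℝ} (hr : r ≠ 0) (t : ℝ) :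
    (r - t * Complex.I : ℂ) ≠ 0 := fun h ↦ by
  simpa [hr] using congrArg Complex.re h

open Complex in
lemma charFun_expMeasure {r : ℝ} (hr : 0 < r) (t : ℝ) :
    charFun (expMeasure r) t = r / (r - t * I) := by
  have hdens : ∀ x, (exponentialPDF r x).toReal • exp (t * x * I)
      = Set.indicator (Set.Ici 0) (fun x : ℝ ↦ r * exp ((t * I - r) * x)) x := by
    intro x
    rcases lt_or_ge x 0 with hx | hx
    · simp [exponentialPDF_of_neg hx, hx]
    · rw [exponentialPDF_of_nonneg hx, ENNReal.toReal_ofReal (by positivity),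
        Set.indicator_of_mem (Set.mem_Ici.mpr hx), Complex.real_smul]
      push_cast
      rw [mul_assoc, ← Complex.exp_add]
      ring_nf
  have hre : (t * I - r : ℂ).re < 0 := by simpa using hr
  have hμ : expMeasure r = volume.withDensity (exponentialPDF r) := rfl
  have hmeas : Measurable (exponentialPDF r) := (measurable_exponentialPDFReal r).ennreal_ofReal
  rw [charFun_apply_real, hμ, integral_withDensity_eq_integral_toReal_smul hmeas
    (ae_of_all _ fun _ ↦ ENNReal.ofReal_lt_top)]
  simp_rw [hdens]
  rw [integral_indicator measurableSet_Ici, integral_Ici_eq_integral_Ioi, integral_const_mul,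
    integral_exp_mul_complex_Ioi hre, Complex.ofReal_zero, mul_zero, Complex.exp_zero,
    show (t * I - r : ℂ) = -(r - t * I) by ring]
  field_simp [ofReal_sub_ofReal_mul_I_ne_zero hr.ne']

lemma expMeasure_eq_add_conv {a b : ℝ} (hb : 0 < b) (hba : b ≤ a) :
    expMeasure b = (b / a).toNNReal • expMeasure a
      + (1 - b / a).toNNReal • (expMeasure a ∗ expMeasure b) := by
  have ha : 0 < a := hb.trans_le hba
  have := isProbabilityMeasure_expMeasure ha
  have := isProbabilityMeasure_expMeasure hb
  refine Measure.ext_of_charFun (funext fun t ↦ ?_)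
  rw [charFun_add_measure, charFun_smul_measure, charFun_smul_measure, charFun_conv,
    charFun_expMeasure ha, charFun_expMeasure hb, Real.coe_toNNReal _ (by positivity),
    Real.coe_toNNReal _ (sub_nonneg.mpr ((div_le_one ha).mpr hba))]
  push_cast
  field_simp [ofReal_sub_ofReal_mul_I_ne_zero ha.ne', ofReal_sub_ofReal_mul_I_ne_zero hb.ne',
    ha.ne']
  ring

/-- A splitting identity for exponential distributions: for `0 < α < β` and bounded measurable
`z`, `∫ z dτ_β = (α/β) ∫ z dτ_α + (1 − α/β) ∫∫ z(s + u) τ_β(du) τ_α(ds)`, where `τ_λ` is the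
exponential distribution with mean `λ` (rate `λ⁻¹`). -/
theorem exponential_splitting_identity
    (α β : ℝ) (hα : 0 < α) (hαβ : α < β)
    (z : ℝ → ℝ) (hz : Measurable z) (C : ℝ) (hbd : ∀ t, |z t| ≤ C) :
    ∫ s, z s ∂(expMeasure β⁻¹)
      = (α / β) * ∫ s, z s ∂(expMeasure α⁻¹)
        + (1 - α / β) * ∫ s, (∫ u, z (s + u) ∂(expMeasure β⁻¹)) ∂(expMeasure α⁻¹) := by
  have hβ : 0 < β := hα.trans hαβ
  have := isProbabilityMeasure_expMeasure (inv_pos.mpr hα)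
  have := isProbabilityMeasure_expMeasure (inv_pos.mpr hβ)
  have hint (μ : Measure ℝ) [IsFiniteMeasure μ] : Integrable z μ :=
    .of_bound hz.aestronglyMeasurable C (ae_of_all _ hbd)
  have hratio : β⁻¹ / α⁻¹ = α / β := by field_simp
  conv_lhs => rw [expMeasure_eq_add_conv (inv_pos.mpr hβ) (inv_anti₀ hα hαβ.le)]
  rw [integral_add_measure (hint _) (hint _), integral_smul_nnreal_measure,
    integral_smul_nnreal_measure, integral_conv (hint _), hratio, NNReal.smul_def, NNReal.smul_def,
    Real.coe_toNNReal _ (div_pos hα hβ).le,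
    Real.coe_toNNReal _ (sub_nonneg.mpr ((div_le_one hβ).mpr hαβ.le)), smul_eq_mul, smul_eq_mul]
end

section
/- Let 𝒳 be a Polish space and let K be a nonempty compact subset of the space of Borel probability measures on 𝒳 with the weak topology. Define p(f) := sup_{μ ∈ K} log ∫ e^f dμ for f ∈ C_b(𝒳). If f_n ∈ C_b(𝒳) converge to f ∈ C_b(𝒳) bounded-uniformly-on-compacts, then p(f_n) → p(f). -/
/-!
A weakly compact set `K` of probability measures on a Polish space is tight (the converse half of
Prokhorov's theorem). Given `ε`, take a compact `C` carrying all but `ε` of the mass of every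
`μ ∈ K`; on `C` the `fs n` converge uniformly, and off `C` the integrands are bounded, so
`∫ e^{fs n} dμ → ∫ e^f dμ` uniformly in `μ ∈ K`. All these integrals are bounded below by `e^{-M}`,
with `M` a common bound on the sup norms, so `log` is Lipschitz on their range, and the supremum of
a uniformly convergent family of functions converges.
-/

open MeasureTheory Filter Topology Set

lemma abs_exp_sub_exp_le {M a b : ℝ} (ha : a ≤ M) (hb : b ≤ M) :
    |Real.exp a - Real.exp b| ≤ Real.exp M * |a - b| := by
  wlog hab : b ≤ a generalizing a b
  · rw [abs_sub_comm, abs_sub_comm a b]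
    exact this hb ha (le_of_not_ge hab)
  rw [abs_of_nonneg (sub_nonneg.2 (Real.exp_le_exp.2 hab)), abs_of_nonneg (sub_nonneg.2 hab)]
  have h_tangent : 1 - Real.exp (b - a) ≤ a - b := by linarith [Real.add_one_le_exp (b - a)]
  calc Real.exp a - Real.exp b = Real.exp a * (1 - Real.exp (b - a)) := by
        rw [mul_sub, mul_one, ← Real.exp_add, add_sub_cancel]
    _ ≤ Real.exp a * (a - b) := mul_le_mul_of_nonneg_left h_tangent (Real.exp_nonneg a)
    _ ≤ Real.exp M * (a - b) := by gcongr

lemma abs_log_sub_log_le {m a b : ℝ} (hm : 0 < m) (ha : m ≤ a) (hb : m ≤ b) :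
    |Real.log a - Real.log b| ≤ m⁻¹ * |a - b| := by
  wlog hab : b ≤ a generalizing a b
  · rw [abs_sub_comm, abs_sub_comm a b]
    exact this hb ha (le_of_not_ge hab)
  have hb0 : 0 < b := hm.trans_le hb
  rw [abs_of_nonneg (sub_nonneg.2 (Real.log_le_log hb0 hab)), abs_of_nonneg (sub_nonneg.2 hab),
    ← Real.log_div (hb0.trans_le hab).ne' hb0.ne']
  calc Real.log (a / b)
      ≤ a / b - 1 := Real.log_le_sub_one_of_pos (div_pos (hb0.trans_le hab) hb0)
    _ = (a - b) / b := by field_simp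
    _ ≤ (a - b) / m := div_le_div_of_nonneg_left (by linarith) hm hb
    _ = m⁻¹ * (a - b) := div_eq_inv_mul _ _

lemma abs_ciSup_sub_ciSup_le {ι : Type*} [Nonempty ι] {a b : ι → ℝ} {c : ℝ}
    (hb : BddAbove (range b)) (h : ∀ i, |a i - b i| ≤ c) :
    |(⨆ i, a i) - ⨆ i, b i| ≤ c := by
  have ha : BddAbove (range a) := by
    obtain ⟨B, hB⟩ := hb
    refine ⟨B + c, forall_mem_range.2 fun i => ?_⟩
    linarith [(abs_le.1 (h i)).2, hB (mem_range_self i)]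
  rw [abs_sub_le_iff, sub_le_iff_le_add, sub_le_iff_le_add]
  constructor
  · refine ciSup_le fun i => ?_
    linarith [(abs_le.1 (h i)).2, le_ciSup hb i]
  · refine ciSup_le fun i => ?_
    linarith [(abs_le.1 (h i)).1, le_ciSup ha i]

lemma tendsto_ciSup_of_tendstoUniformly {ι κ : Type*} {l : Filter κ} {F : κ → ι → ℝ}
    {f : ι → ℝ} (hf : BddAbove (range f)) (h : TendstoUniformly F f l) :
    Tendsto (fun k => ⨆ i, F k i) l (𝓝 (⨆ i, f i)) := by
  rcases isEmpty_or_nonempty ι with hι | hι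
  · simp only [Real.iSup_of_isEmpty]
    exact tendsto_const_nhds
  rw [Metric.tendsto_nhds]
  intro ε hε
  filter_upwards [Metric.tendstoUniformly_iff.1 h (ε / 2) (half_pos hε)] with k hk
  rw [Real.dist_eq]
  refine (abs_ciSup_sub_ciSup_le hf fun i => ?_).trans_lt (half_lt_self hε)
  rw [← Real.dist_eq, dist_comm]
  exact (hk i).le

lemma abs_integral_le_of_abs_le_on {α : Type*} [MeasurableSpace α] {μ : Measure α}
    [IsProbabilityMeasure μ] {w : α → ℝ} (hw : Integrable w μ) {C : Set α}
    (hC : MeasurableSet C) {B η : ℝ} (hη0 : 0 ≤ η) (hB : ∀ x, |w x| ≤ B) (hη : ∀ x ∈ C, |w x| ≤ η) :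
    |∫ x, w x ∂μ| ≤ η + μ.real Cᶜ * B := by
  have h_on : |∫ x in C, w x ∂μ| ≤ η * μ.real C :=
    norm_setIntegral_le_of_norm_le_const (measure_lt_top μ C) (f := w) hη
  have h_off : |∫ x, w x ∂μ - ∫ x in C, w x ∂μ| ≤ μ.real Cᶜ * B :=
    norm_integral_sub_setIntegral_le (f := w) (Eventually.of_forall hB) hC hw
  calc |∫ x, w x ∂μ| = |∫ x in C, w x ∂μ + (∫ x, w x ∂μ - ∫ x in C, w x ∂μ)| := by
        rw [add_sub_cancel]
    _ ≤ η * μ.real C + μ.real Cᶜ * B := (abs_add_le _ _).trans (add_le_add h_on h_off)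
    _ ≤ η + μ.real Cᶜ * B := by
        gcongr
        exact mul_le_of_le_one_right hη0 measureReal_le_one

noncomputable def logIntegralExp {X : Type*} [MeasurableSpace X] (μ : Measure X) (g : X → ℝ) :
    ℝ :=
  Real.log (∫ x, Real.exp (g x) ∂μ)

section BoundedContinuous

variable {X : Type*} [TopologicalSpace X] [MeasurableSpace X] [OpensMeasurableSpace X]
  (μ : Measure X)

lemma BoundedContinuousFunction.integrable_exp [IsFiniteMeasure μ]
    (g : BoundedContinuousFunction X ℝ) :
    Integrable (fun x => Real.exp (g x)) μ :=
  .of_bound (Real.continuous_exp.comp g.continuous).aestronglyMeasurable (Real.exp ‖g‖)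
    (Eventually.of_forall fun x => by
      rw [Real.norm_eq_abs, Real.abs_exp]
      exact Real.exp_le_exp.2 ((le_abs_self _).trans (g.norm_coe_le_norm x)))

lemma BoundedContinuousFunction.exp_neg_norm_le_integral_exp [IsProbabilityMeasure μ]
    (g : BoundedContinuousFunction X ℝ) :
    Real.exp (-‖g‖) ≤ ∫ x, Real.exp (g x) ∂μ := by
  simpa using integral_mono (integrable_const _) (g.integrable_exp μ)
    fun x => Real.exp_le_exp.2 (neg_le_of_abs_le (g.norm_coe_le_norm x))

lemma BoundedContinuousFunction.integral_exp_le_exp_norm [IsProbabilityMeasure μ]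
    (g : BoundedContinuousFunction X ℝ) :
    ∫ x, Real.exp (g x) ∂μ ≤ Real.exp ‖g‖ := by
  simpa using integral_mono (g.integrable_exp μ) (integrable_const _)
    fun x => Real.exp_le_exp.2 ((le_abs_self _).trans (g.norm_coe_le_norm x))

lemma BoundedContinuousFunction.logIntegralExp_le_norm [IsProbabilityMeasure μ]
    (g : BoundedContinuousFunction X ℝ) :
    logIntegralExp μ g ≤ ‖g‖ :=
  (Real.log_le_iff_le_exp ((Real.exp_pos _).trans_le (g.exp_neg_norm_le_integral_exp μ))).2
    (g.integral_exp_le_exp_norm μ)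

lemma abs_logIntegralExp_sub_le [IsProbabilityMeasure μ] {g h : BoundedContinuousFunction X ℝ}
    {M η : ℝ} (hg : ‖g‖ ≤ M) (hh : ‖h‖ ≤ M) {C : Set X} (hC : MeasurableSet C) (hη0 : 0 ≤ η)
    (hη : ∀ x ∈ C, |g x - h x| ≤ η) :
    |logIntegralExp μ g - logIntegralExp μ h| ≤ Real.exp (2 * M) * (η + μ.real Cᶜ) := by
  have h_lower {k : BoundedContinuousFunction X ℝ} (hk : ‖k‖ ≤ M) :
      Real.exp (-M) ≤ ∫ x, Real.exp (k x) ∂μ :=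
    (Real.exp_le_exp.2 (neg_le_neg hk)).trans (k.exp_neg_norm_le_integral_exp μ)
  have h_le {k : BoundedContinuousFunction X ℝ} (hk : ‖k‖ ≤ M) (x : X) : k x ≤ M :=
    (le_abs_self _).trans ((k.norm_coe_le_norm x).trans hk)
  have h_integral : |∫ x, Real.exp (g x) ∂μ - ∫ x, Real.exp (h x) ∂μ| ≤
      Real.exp M * η + μ.real Cᶜ * Real.exp M := by
    rw [← integral_sub (g.integrable_exp μ) (h.integrable_exp μ)]
    refine abs_integral_le_of_abs_le_on ((g.integrable_exp μ).sub (h.integrable_exp μ)) hC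
      (by positivity) (fun x => ?_) (fun x hx => ?_)
    · exact abs_sub_le_of_nonneg_of_le (Real.exp_nonneg _) (Real.exp_le_exp.2 (h_le hg x))
        (Real.exp_nonneg _) (Real.exp_le_exp.2 (h_le hh x))
    · exact (abs_exp_sub_exp_le (h_le hg x) (h_le hh x)).trans (by gcongr; exact hη x hx)
  calc |logIntegralExp μ g - logIntegralExp μ h|
      ≤ (Real.exp (-M))⁻¹ * |∫ x, Real.exp (g x) ∂μ - ∫ x, Real.exp (h x) ∂μ| :=
        abs_log_sub_log_le (Real.exp_pos _) (h_lower hg) (h_lower hh)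
    _ ≤ Real.exp M * (Real.exp M * η + μ.real Cᶜ * Real.exp M) := by
        rw [Real.exp_neg, inv_inv]
        gcongr
    _ = Real.exp (2 * M) * (η + μ.real Cᶜ) := by
        rw [two_mul, Real.exp_add]
        ring

lemma tendstoUniformlyOn_logIntegralExp [T2Space X] {ι : Type*} {S : Set (ProbabilityMeasure X)}
    (hS : IsTightMeasureSet {(μ : Measure X) | μ ∈ S}) {l : Filter ι}
    {fs : ι → BoundedContinuousFunction X ℝ} {f : BoundedContinuousFunction X ℝ} {M : ℝ}
    (hfs : ∀ i, ‖fs i‖ ≤ M) (hf : ‖f‖ ≤ M)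
    (hunif : ∀ C : Set X, IsCompact C → TendstoUniformlyOn (fun i x => fs i x) f l C) :
    TendstoUniformlyOn (fun i (μ : ProbabilityMeasure X) => logIntegralExp μ (fs i))
      (fun μ => logIntegralExp μ f) l S := by
  rw [Metric.tendstoUniformlyOn_iff]
  intro ε hε
  set δ := ε / (4 * Real.exp (2 * M)) with hδ
  have hδ0 : 0 < δ := by positivity
  obtain ⟨C, hC, hCμ⟩ := isTightMeasureSet_iff_exists_isCompact_measure_compl_le.1 hS
    (ENNReal.ofReal δ) (ENNReal.ofReal_pos.2 hδ0)
  filter_upwards [Metric.tendstoUniformlyOn_iff.1 (hunif C hC) δ hδ0] with i hi μ hμ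
  have h_tail : μ.toMeasure.real Cᶜ ≤ δ :=
    ENNReal.toReal_le_of_le_ofReal hδ0.le (hCμ μ ⟨μ, hμ, rfl⟩)
  have h_near : ∀ x ∈ C, |fs i x - f x| ≤ δ := fun x hx => by
    rw [← Real.dist_eq, dist_comm]
    exact (hi x hx).le
  rw [Real.dist_eq, abs_sub_comm]
  calc |logIntegralExp μ (fs i) - logIntegralExp μ f|
      ≤ Real.exp (2 * M) * (δ + μ.toMeasure.real Cᶜ) :=
        abs_logIntegralExp_sub_le μ (hfs i) hf hC.measurableSet hδ0.le h_near
    _ ≤ Real.exp (2 * M) * (δ + δ) := by gcongr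
    _ < ε := by
        rw [hδ]
        field_simp
        linarith

end BoundedContinuous

theorem sup_log_exp_integral_continuous_buc_general
    {𝒳 : Type*} [TopologicalSpace 𝒳] [PolishSpace 𝒳] [MeasurableSpace 𝒳] [BorelSpace 𝒳]
    (K : Set (ProbabilityMeasure 𝒳)) (hK : IsCompact K)
    (fs : ℕ → BoundedContinuousFunction 𝒳 ℝ) (f : BoundedContinuousFunction 𝒳 ℝ)
    (hbd : ∃ C : ℝ, ∀ n, ‖fs n‖ ≤ C)
    (hunif : ∀ K' : Set 𝒳, IsCompact K' →
      TendstoUniformlyOn (fun n x => fs n x) (fun x => f x) atTop K') :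
    Tendsto
      (fun n => ⨆ μ : K, Real.log (∫ x, Real.exp (fs n x) ∂((μ : ProbabilityMeasure 𝒳) : Measure 𝒳)))
      atTop
      (𝓝 (⨆ μ : K, Real.log (∫ x, Real.exp (f x) ∂((μ : ProbabilityMeasure 𝒳) : Measure 𝒳)))) := by
  obtain ⟨C, hC⟩ := hbd
  let := TopologicalSpace.upgradeIsCompletelyMetrizable 𝒳
  have h_tight := isTightMeasureSet_of_isCompact_closure hK.closure
  have h_unif := tendstoUniformlyOn_logIntegralExp h_tight
    (fun n => (hC n).trans (le_max_left C ‖f‖)) (le_max_right C ‖f‖) hunif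
  have h_bdd : BddAbove (range fun μ : K => logIntegralExp (μ : Measure 𝒳) f) :=
    ⟨‖f‖, forall_mem_range.2 fun μ => f.logIntegralExp_le_norm (μ : Measure 𝒳)⟩
  exact tendsto_ciSup_of_tendstoUniformly h_bdd
    (tendstoUniformlyOn_iff_tendstoUniformly_comp_coe.1 h_unif)

/-- For a nonempty weakly compact set `K` of Borel probability measures on a Polish space,
the functional `p(f) := sup_{μ ∈ K} log ∫ e^f dμ` is sequentially continuous for
bounded-uniform-on-compacts (strict) convergence on `C_b(𝒳)`. -/
theorem sup_log_exp_integral_continuous_buc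
    {𝒳 : Type*} [TopologicalSpace 𝒳] [PolishSpace 𝒳] [MeasurableSpace 𝒳] [BorelSpace 𝒳]
    (K : Set (ProbabilityMeasure 𝒳)) (hKne : K.Nonempty) (hK : IsCompact K)
    (fs : ℕ → BoundedContinuousFunction 𝒳 ℝ) (f : BoundedContinuousFunction 𝒳 ℝ)
    (hbd : ∃ C : ℝ, ∀ n, ‖fs n‖ ≤ C)
    (hunif : ∀ K' : Set 𝒳, IsCompact K' →
      TendstoUniformlyOn (fun n x => fs n x) (fun x => f x) atTop K') :
    Tendsto
      (fun n => ⨆ μ : K, Real.log (∫ x, Real.exp (fs n x) ∂((μ : ProbabilityMeasure 𝒳) : Measure 𝒳)))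
      atTop
      (𝓝 (⨆ μ : K, Real.log (∫ x, Real.exp (f x) ∂((μ : ProbabilityMeasure 𝒳) : Measure 𝒳)))) :=
  sup_log_exp_integral_continuous_buc_general K hK fs f hbd hunif
end

section
/- Let 𝒳 be a Polish space. If Borel probability measures μ_n on 𝒳 converge weakly to μ, and f_n ∈ C_b(𝒳) converge to f ∈ C_b(𝒳) bounded-uniformly-on-compacts, then log ∫ e^{f_n} dμ_n → log ∫ e^f dμ. -/
/-!
A weakly convergent sequence of probability measures on a Polish space is tight. On a compact set
`K` that carries all but `ε` of the mass of every `μₙ`, the uniformly bounded functions `e^{fₙ}`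
converge uniformly to `e^f`, and off `K` they contribute at most a constant times `ε`; hence
`∫ e^{fₙ} dμₙ - ∫ e^f dμₙ → 0`, while `∫ e^f dμₙ → ∫ e^f dμ` by weak convergence. The limit is
positive, where `log` is continuous.
-/

open MeasureTheory Filter Topology Set
open scoped BoundedContinuousFunction

namespace BoundedContinuousFunction

variable {X : Type*} [TopologicalSpace X]

noncomputable def exp (f : X →ᵇ ℝ) : X →ᵇ ℝ :=
  ofNormedAddCommGroup (fun x ↦ Real.exp (f x)) (by fun_prop) (Real.exp ‖f‖) fun x ↦ by
    rw [Real.norm_eq_abs, abs_of_pos (Real.exp_pos _)]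
    exact Real.exp_le_exp.2 ((le_abs_self _).trans (f.norm_coe_le_norm x))

lemma norm_exp_le (f : X →ᵇ ℝ) : ‖f.exp‖ ≤ Real.exp ‖f‖ :=
  norm_ofNormedAddCommGroup_le _ (Real.exp_pos _).le _

lemma norm_integral_le_add_norm_mul_measureReal_compl [MeasurableSpace X]
    [OpensMeasurableSpace X] (ν : Measure X) [IsProbabilityMeasure ν] (h : X →ᵇ ℝ)
    {K : Set X} (hK : MeasurableSet K) {δ : ℝ} (hδ : 0 ≤ δ) (hhK : ∀ x ∈ K, ‖h x‖ ≤ δ) :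
    ‖∫ x, h x ∂ν‖ ≤ δ + ‖h‖ * ν.real Kᶜ := by
  rw [← integral_add_compl hK (h.integrable ν)]
  calc ‖(∫ x in K, h x ∂ν) + ∫ x in Kᶜ, h x ∂ν‖
      ≤ ‖∫ x in K, h x ∂ν‖ + ‖∫ x in Kᶜ, h x ∂ν‖ := norm_add_le _ _
    _ ≤ δ * ν.real K + ‖h‖ * ν.real Kᶜ := by
      gcongr
      · exact norm_setIntegral_le_of_norm_le_const (measure_lt_top ν K) hhK
      · exact norm_setIntegral_le_of_norm_le_const (measure_lt_top ν Kᶜ)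
          fun x _ ↦ h.norm_coe_le_norm x
    _ ≤ δ + ‖h‖ * ν.real Kᶜ := by
      gcongr
      exact mul_le_of_le_one_right hδ measureReal_le_one

end BoundedContinuousFunction

lemma isTightMeasureSet_range_of_tendsto {X : Type*} [TopologicalSpace X] [PolishSpace X]
    [MeasurableSpace X] [BorelSpace X] {μs : ℕ → ProbabilityMeasure X} {μ : ProbabilityMeasure X}
    (hμs : Tendsto μs atTop (𝓝 μ)) :
    IsTightMeasureSet (range fun n ↦ (μs n : Measure X)) := by
  let := TopologicalSpace.upgradeIsCompletelyMetrizable X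
  have hcomp : IsCompact (closure (insert μ (range μs))) := hμs.isCompact_insert_range.closure
  refine (isTightMeasureSet_of_isCompact_closure hcomp).subset ?_
  rintro _ ⟨n, rfl⟩
  exact ⟨μs n, mem_insert_of_mem _ (mem_range_self n), rfl⟩

lemma tendsto_integral_zero_of_isTightMeasureSet {X ι : Type*} [TopologicalSpace X] [T2Space X]
    [MeasurableSpace X] [OpensMeasurableSpace X] {l : Filter ι} {μs : ι → Measure X}
    [∀ i, IsProbabilityMeasure (μs i)] (htight : IsTightMeasureSet (range μs))
    {hs : ι → X →ᵇ ℝ} {C : ℝ} (hC : ∀ i, ‖hs i‖ ≤ C)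
    (hunif : ∀ K, IsCompact K → TendstoUniformlyOn (fun i x ↦ hs i x) 0 l K) :
    Tendsto (fun i ↦ ∫ x, hs i x ∂μs i) l (𝓝 0) := by
  rw [Metric.tendsto_nhds]
  intro ε hε
  set η := ε / (2 * (|C| + 1))
  have hη : 0 < η := by positivity
  obtain ⟨K, hK, hKμs⟩ := isTightMeasureSet_iff_exists_isCompact_measure_compl_le.mp htight
    (ENNReal.ofReal η) (by simpa using hη)
  filter_upwards [Metric.tendstoUniformlyOn_iff.mp (hunif K hK) (ε / 2) (by positivity)]
    with i hi
  have hsmall : ∀ x ∈ K, ‖hs i x‖ ≤ ε / 2 := fun x hx ↦ by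
    simpa [dist_comm] using (hi x hx).le
  have htail : (μs i).real Kᶜ ≤ η :=
    ENNReal.toReal_le_of_le_ofReal hη.le (hKμs _ (mem_range_self i))
  rw [dist_zero_right]
  calc ‖∫ x, hs i x ∂μs i‖ ≤ ε / 2 + ‖hs i‖ * (μs i).real Kᶜ :=
        (hs i).norm_integral_le_add_norm_mul_measureReal_compl _ hK.measurableSet
          (by positivity) hsmall
    _ ≤ ε / 2 + |C| * η := by
        gcongr
        exact (hC i).trans (le_abs_self C)
    _ < ε / 2 + (|C| + 1) * η := by linarith
    _ = ε := by simp only [η]; field_simp; ring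

theorem tendsto_integral_of_tendsto_of_tendstoUniformlyOn_isCompact {X : Type*}
    [TopologicalSpace X] [PolishSpace X] [MeasurableSpace X] [BorelSpace X]
    {μs : ℕ → ProbabilityMeasure X} {μ : ProbabilityMeasure X} (hμs : Tendsto μs atTop (𝓝 μ))
    {gs : ℕ → X →ᵇ ℝ} {g : X →ᵇ ℝ} {C : ℝ} (hC : ∀ n, ‖gs n‖ ≤ C)
    (hunif : ∀ K, IsCompact K → TendstoUniformlyOn (fun n x ↦ gs n x) g atTop K) :
    Tendsto (fun n ↦ ∫ x, gs n x ∂(μs n : Measure X)) atTop (𝓝 (∫ x, g x ∂(μ : Measure X))) := by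
  have hdiff : Tendsto (fun n ↦ ∫ x, (gs n - g) x ∂(μs n : Measure X)) atTop (𝓝 0) := by
    refine tendsto_integral_zero_of_isTightMeasureSet (isTightMeasureSet_range_of_tendsto hμs)
      (C := C + ‖g‖) (fun n ↦ (norm_sub_le _ _).trans (by gcongr; exact hC n)) fun K hK ↦ ?_
    have hconst : TendstoUniformlyOn (fun (_ : ℕ) ↦ ⇑g) g atTop K :=
      fun u hu ↦ .of_forall fun _ _ _ ↦ refl_mem_uniformity hu
    have := (hunif K hK).sub hconst
    rwa [sub_self] at this
  have hlim := ProbabilityMeasure.tendsto_iff_forall_integral_tendsto.mp hμs g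
  convert hdiff.add hlim using 2 with n
  · rw [← integral_add ((gs n - g).integrable _) (g.integrable _)]
    simp
  · simp

/-- Joint sequential continuity of `(f, μ) ↦ log ∫ e^f dμ` on a Polish space: if `μ_n → μ`
weakly and `f_n → f` bounded-uniformly-on-compacts (i.e. strictly), then
`log ∫ e^{f_n} dμ_n → log ∫ e^f dμ`. -/
theorem log_exp_integral_tendsto_of_weak_and_buc
    {𝒳 : Type*} [TopologicalSpace 𝒳] [PolishSpace 𝒳] [MeasurableSpace 𝒳] [BorelSpace 𝒳]
    (μs : ℕ → ProbabilityMeasure 𝒳) (μ : ProbabilityMeasure 𝒳)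
    (hμs : Tendsto μs atTop (𝓝 μ))
    (fs : ℕ → BoundedContinuousFunction 𝒳 ℝ) (f : BoundedContinuousFunction 𝒳 ℝ)
    (hbd : ∃ C : ℝ, ∀ n, ‖fs n‖ ≤ C)
    (hunif : ∀ K : Set 𝒳, IsCompact K →
      TendstoUniformlyOn (fun n x => fs n x) (fun x => f x) atTop K) :
    Tendsto (fun n => Real.log (∫ x, Real.exp (fs n x) ∂(μs n : Measure 𝒳))) atTop
      (𝓝 (Real.log (∫ x, Real.exp (f x) ∂(μ : Measure 𝒳)))) := by
  obtain ⟨C, hC⟩ := hbd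
  set R := max C ‖f‖
  have hfs_mem : ∀ n x, fs n x ∈ Metric.closedBall 0 R := fun n x ↦
    mem_closedBall_zero_iff.2 (((fs n).norm_coe_le_norm x).trans ((hC n).trans (le_max_left _ _)))
  have hf_mem : ∀ x, f x ∈ Metric.closedBall 0 R := fun x ↦
    mem_closedBall_zero_iff.2 ((f.norm_coe_le_norm x).trans (le_max_right _ _))
  have hexp_unif : UniformContinuousOn Real.exp (Metric.closedBall 0 R) :=
    (isCompact_closedBall 0 R).uniformContinuousOn_of_continuous Real.continuous_exp.continuousOn
  have hexp : Tendsto (fun n ↦ ∫ x, (fs n).exp x ∂(μs n : Measure 𝒳)) atTop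
      (𝓝 (∫ x, f.exp x ∂(μ : Measure 𝒳))) :=
    tendsto_integral_of_tendsto_of_tendstoUniformlyOn_isCompact hμs
      (fun n ↦ (fs n).norm_exp_le.trans (Real.exp_le_exp.2 (hC n))) fun K hK ↦
      hexp_unif.comp_tendstoUniformlyOn_eventually (.of_forall fun n x _ ↦ hfs_mem n x)
        (fun x _ ↦ hf_mem x) (hunif K hK)
  exact hexp.log (integral_exp_pos (f.exp.integrable _)).ne'
end
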